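/- arXiv:2401.15301 — 4 statements merged into one kernel-verified Lean document; each statement's English description precedes it below -/
import Mathlib

section
/- For every α ∈ (0,1) and every C ≥ 1 there exists a constant C₀ = C₀(α, C) > 0 with the following property: whenever x and y are real numbers with 0 < x ≤ y ≤ 1 and x^{2-α} ≤ C (y - x), one has x^{α-1} - y^{α-1} ≥ C₀. -/
/-!
Write `p = α - 1 < 0`. The tangent line of the convex function `t ↦ t ^ p` at `y` gives
`x ^ p - y ^ p ≥ -p (y - x) y ^ (p - 1)`. If `y ≤ 2x`, the step hypothesis
`y - x ≥ x ^ (1 - p) / C` and `y ^ (p - 1) ≥ (2x) ^ (p - 1)` bound this below by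
`-p 2 ^ (p - 1) / C`. If `y > 2x`, then `y ^ p ≤ 2 ^ p x ^ p` and `x ^ p ≥ 1` give
`x ^ p - y ^ p ≥ 1 - 2 ^ p`.
-/

namespace Real

theorem one_add_mul_sub_one_le_rpow_of_nonpos {r p : ℝ} (hr : 0 < r) (hp : p ≤ 0) :
    1 + p * (r - 1) ≤ r ^ p := by
  -- `exp t ≥ 1 + t` and `log r ≤ r - 1`, the latter reversed by the sign of `p`
  calc 1 + p * (r - 1) ≤ 1 + p * log r := by
        gcongr 1 + ?_
        exact mul_le_mul_of_nonpos_left (log_le_sub_one_of_pos hr) hp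
    _ ≤ exp (log r * p) := by linarith [add_one_le_exp (log r * p)]
    _ = r ^ p := (rpow_def_of_pos hr p).symm

theorem rpow_add_mul_rpow_sub_one_mul_sub_le_rpow_of_nonpos {x y p : ℝ} (hx : 0 < x) (hy : 0 < y)
    (hp : p ≤ 0) : y ^ p + p * y ^ (p - 1) * (x - y) ≤ x ^ p := by
  have h := mul_le_mul_of_nonneg_left (one_add_mul_sub_one_le_rpow_of_nonpos (div_pos hx hy) hp)
    (rpow_nonneg hy.le p)
  rw [div_rpow hx.le hy.le] at h
  rw [rpow_sub_one hy.ne']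
  calc y ^ p + p * (y ^ p / y) * (x - y) = y ^ p * (1 + p * (x / y - 1)) := by
        field_simp
    _ ≤ y ^ p * (x ^ p / y ^ p) := h
    _ = x ^ p := by field_simp

theorem one_sub_two_rpow_le_rpow_sub_rpow {x y p : ℝ} (hx : 0 < x) (hx1 : x ≤ 1)
    (hxy : 2 * x ≤ y) (hp : p ≤ 0) : 1 - 2 ^ p ≤ x ^ p - y ^ p := by
  have h2 : (2 : ℝ) ^ p ≤ 1 := rpow_le_one_of_one_le_of_nonpos one_le_two hp
  calc 1 - 2 ^ p ≤ (1 - 2 ^ p) * x ^ p :=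
        le_mul_of_one_le_right (by linarith) (one_le_rpow_of_pos_of_le_one_of_nonpos hx hx1 hp)
    _ = x ^ p - (2 * x) ^ p := by rw [mul_rpow zero_le_two hx.le]; ring
    _ ≤ x ^ p - y ^ p := by gcongr x ^ p - ?_; exact rpow_le_rpow_of_nonpos (by positivity) hxy hp

theorem neg_mul_two_rpow_sub_one_div_le_rpow_sub_rpow {x y p C : ℝ} (hx : 0 < x) (hxy : x ≤ y)
    (hy : y ≤ 2 * x) (hp : p ≤ 0) (hC : 0 < C) (hstep : x ^ (1 - p) ≤ C * (y - x)) :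
    -p * 2 ^ (p - 1) / C ≤ x ^ p - y ^ p := by
  have hx_inv : x ^ (1 - p) * x ^ (p - 1) = 1 := by
    rw [← rpow_add hx]; norm_num
  calc -p * 2 ^ (p - 1) / C = -p * (x ^ (1 - p) / C) * (2 ^ (p - 1) * x ^ (p - 1)) := by
        field_simp; rw [mul_assoc, hx_inv, mul_one]
    _ ≤ -p * (y - x) * (2 * x) ^ (p - 1) := by
        rw [mul_rpow zero_le_two hx.le]
        gcongr
        · exact neg_nonneg.2 hp
        · exact div_le_of_le_mul₀ hC.le (sub_nonneg.2 hxy) (by rwa [mul_comm])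
    _ ≤ -p * (y - x) * y ^ (p - 1) :=
        mul_le_mul_of_nonneg_left (rpow_le_rpow_of_nonpos (hx.trans_le hxy) hy (by linarith))
          (mul_nonneg (neg_nonneg.2 hp) (sub_nonneg.2 hxy))
    _ ≤ x ^ p - y ^ p := by
        linarith [rpow_add_mul_rpow_sub_one_mul_sub_le_rpow_of_nonpos hx (hx.trans_le hxy) hp]

theorem exists_pos_le_rpow_sub_rpow_of_le_mul_sub {p C : ℝ} (hp : p < 0) (hC : 0 < C) :
    ∃ C₀ > 0, ∀ x y : ℝ, 0 < x → x ≤ y → y ≤ 1 → x ^ (1 - p) ≤ C * (y - x) →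
      C₀ ≤ x ^ p - y ^ p := by
  refine ⟨min (1 - 2 ^ p) (-p * 2 ^ (p - 1) / C), lt_min ?_ ?_, fun x y hx hxy hy1 hstep => ?_⟩
  · linarith [rpow_lt_one_of_one_lt_of_neg one_lt_two hp]
  · exact div_pos (mul_pos (neg_pos.2 hp) (rpow_pos_of_pos two_pos _)) hC
  rcases le_total y (2 * x) with hy | hy
  · exact (min_le_right _ _).trans
      (neg_mul_two_rpow_sub_one_div_le_rpow_sub_rpow hx hxy hy hp.le hC hstep)
  · exact (min_le_left _ _).trans
      (one_sub_two_rpow_le_rpow_sub_rpow hx (hxy.trans hy1) hy hp.le)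

end Real

/-- For `α ∈ (0,1)` and `C ≥ 1` there is `C₀ > 0` such that whenever
`0 < x ≤ y ≤ 1` and `x^{2-α} ≤ C (y - x)`, one has
`x^{α-1} - y^{α-1} ≥ C₀`. -/
theorem rpow_diff_ge_of_lojasiewicz_step (α C : ℝ)
    (hα : α ∈ Set.Ioo (0 : ℝ) 1) (hC : 1 ≤ C) :
    ∃ C₀ > (0 : ℝ), ∀ x y : ℝ, 0 < x → x ≤ y → y ≤ 1 →
      x ^ (2 - α) ≤ C * (y - x) →
      C₀ ≤ x ^ (α - 1) - y ^ (α - 1) := by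
  have h2α : 2 - α = 1 - (α - 1) := by ring
  simpa only [h2α] using
    Real.exists_pos_le_rpow_sub_rpow_of_le_mul_sub (by linarith [hα.2]) (zero_lt_one.trans_le hC)
end

section
/- Let α ∈ (0,1] and C ≥ 1. There exists a constant C' = C'(α, C) > 0 such that the following holds for every T ≥ 1. Let I : ℝ → ℝ be nondecreasing with 0 ≤ I(t) ≤ 1 for all t ∈ [0, T] and I(t)^{2-α} ≤ C (I(t+1) - I(t)) for all t ∈ (0, T-1]. Let f : ℝ → [0, ∞) be a measurable function such that for all 0 ≤ a ≤ b ≤ T, ∫_{\{t : a ≤ |t| ≤ b\}} f(t)² dt ≤ I(b) - I(a). Then ∫_{-T}^{T} f(t) dt ≤ C' · I(T)^{α/2}. -/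
/-!
On a shell `a ≤ |t| ≤ b`, Cauchy–Schwarz bounds `∫ f` by `√(2 (b - a) (I b - I a))`, so it suffices
to cut `[-T, T]` into shells on which width times energy decays geometrically.

For `α = 1` the recursion reads `I t ≤ (C / (C + 1)) I (t + 1)`, so
`I (T - j) ≤ (C / (C + 1)) ^ j I T` and unit shells work. For `α < 1`, Bernoulli's inequality turns
`I t ^ (2 - α) ≤ C (I (t + 1) - I t)` into `I t ^ (α - 1) ≥ I (t + 1) ^ (α - 1) + (1 - α) / (4 C)`,
so `I ^ (α - 1)` grows linearly as one moves inwards from `T`. Shells of widths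
`2 ^ j I(T) ^ (α - 1)` (up to a constant) then carry energy decaying like `2 ^ (-j / (1 - α))`,
which beats the growth of the widths, and the resulting geometric series sums to a multiple of
`I(T) ^ (α / 2)`.
-/

open MeasureTheory Set
open scoped ENNReal

namespace DiniEstimate

def annulus (a b : ℝ) : Set ℝ := {t | a ≤ |t| ∧ |t| ≤ b}

lemma annulus_subset_Icc_union_Icc (a b : ℝ) : annulus a b ⊆ Icc (-b) (-a) ∪ Icc a b := by
  intro t ⟨h1, h2⟩
  rcases le_total 0 t with ht | ht
  · rw [abs_of_nonneg ht] at h1 h2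
    exact Or.inr ⟨h1, h2⟩
  · rw [abs_of_nonpos ht] at h1 h2
    exact Or.inl ⟨by linarith, by linarith⟩

lemma volume_annulus_le (a b : ℝ) : volume (annulus a b) ≤ ENNReal.ofReal (2 * (b - a)) :=
  calc volume (annulus a b) ≤ volume (Icc (-b) (-a)) + volume (Icc a b) :=
        (measure_mono (annulus_subset_Icc_union_Icc a b)).trans (measure_union_le _ _)
    _ = ENNReal.ofReal (2 * (b - a)) := by
        rw [Real.volume_Icc, Real.volume_Icc, ENNReal.ofReal_mul zero_le_two, ENNReal.ofReal_ofNat,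
          two_mul, neg_sub_neg]

lemma lintegral_le_rpow_measure_univ_mul {X : Type*} [MeasurableSpace X] {μ : Measure X}
    {g : X → ℝ≥0∞} (hg : AEMeasurable g μ) :
    ∫⁻ x, g x ∂μ ≤ (μ univ * ∫⁻ x, g x ^ 2 ∂μ) ^ (1 / 2 : ℝ) := by
  have h := ENNReal.lintegral_mul_le_Lp_mul_Lq μ Real.HolderConjugate.two_two hg aemeasurable_const
    (g := fun _ => 1)
  simp only [Pi.mul_apply, mul_one, one_pow, lintegral_const, one_mul, ENNReal.rpow_two] at h
  rwa [ENNReal.mul_rpow_of_nonneg _ _ (by norm_num), mul_comm]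

lemma lintegral_annulus_le_sqrt {f : ℝ → ℝ} (hf : Measurable f) (hf0 : ∀ t, 0 ≤ f t)
    {a b M : ℝ} (hab : a ≤ b) (hM : 0 ≤ M)
    (h : ∫⁻ t in annulus a b, ENNReal.ofReal (f t ^ 2) ≤ ENNReal.ofReal M) :
    ∫⁻ t in annulus a b, ENNReal.ofReal (f t) ≤ ENNReal.ofReal √(2 * (b - a) * M) := by
  calc ∫⁻ t in annulus a b, ENNReal.ofReal (f t)
      ≤ (volume (annulus a b) * ∫⁻ t in annulus a b, ENNReal.ofReal (f t) ^ 2) ^ (1 / 2 : ℝ) := by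
        simpa only [Measure.restrict_apply_univ] using lintegral_le_rpow_measure_univ_mul
          (μ := volume.restrict (annulus a b)) hf.ennreal_ofReal.aemeasurable
    _ ≤ (ENNReal.ofReal (2 * (b - a)) * ENNReal.ofReal M) ^ (1 / 2 : ℝ) := by
        simp_rw [← ENNReal.ofReal_pow (hf0 _)]
        gcongr
        exact volume_annulus_le a b
    _ = ENNReal.ofReal √(2 * (b - a) * M) := by
        rw [← ENNReal.ofReal_mul (by linarith), ENNReal.ofReal_rpow_of_nonneg
          (mul_nonneg (by linarith) hM) (by norm_num), Real.sqrt_eq_rpow]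

lemma annulus_subset_iUnion {r : ℕ → ℝ} (hr : Antitone r) (N : ℕ) :
    annulus (r N) (r 0) ⊆ ⋃ j, annulus (r (j + 1)) (r j) := by
  induction N with
  | zero => exact fun t ht => mem_iUnion.2 ⟨0, (hr (Nat.zero_le 1)).trans ht.1, ht.2⟩
  | succ N ih =>
    intro t ⟨h1, h2⟩
    rcases le_or_gt (r N) |t| with h | h
    · exact ih ⟨h, h2⟩
    · exact mem_iUnion.2 ⟨N, h1, h.le⟩

lemma tsum_ofReal_mul_geometric {c ρ : ℝ} (hc : 0 ≤ c) (hρ0 : 0 ≤ ρ) (hρ1 : ρ < 1) :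
    ∑' j : ℕ, ENNReal.ofReal (c * ρ ^ j) = ENNReal.ofReal (c / (1 - ρ)) := by
  rw [← ENNReal.ofReal_tsum_of_nonneg (fun j => by positivity)
    ((summable_geometric_of_lt_one hρ0 hρ1).mul_left c), tsum_mul_left,
    tsum_geometric_of_lt_one hρ0 hρ1, div_eq_mul_inv]

/-- `s` cuts `[-T, T]` into the shells `T - s (j + 1) ≤ |t| ≤ T - s j` (radii cut off at `0`,
see `radius`), and on the `j`-th shell the width times the energy at the outer radius is at most
`A * q ^ j`. In the paper's dyadic decomposition `t_i = T - e^i`, `s` runs through the `e^i`. -/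
structure ShellDecay (I : ℝ → ℝ) (T A q : ℝ) (s : ℕ → ℝ) : Prop where
  mono : Monotone s
  zero : s 0 = 0
  exhausts : ∃ N, T ≤ s N
  decay : ∀ j, 0 < T - s j → 2 * (s (j + 1) - s j) * I (T - s j) ≤ A * q ^ j

namespace ShellDecay

def radius (T : ℝ) (s : ℕ → ℝ) (j : ℕ) : ℝ := max (T - s j) 0

variable {I : ℝ → ℝ} {T A q : ℝ} {s : ℕ → ℝ}

lemma radius_antitone (h : ShellDecay I T A q s) : Antitone (radius T s) :=
  fun _ _ hij => max_le_max (by linarith [h.mono hij]) le_rfl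

lemma radius_le (hT : 0 ≤ T) (h : ShellDecay I T A q s) (j : ℕ) : radius T s j ≤ T :=
  max_le (by linarith [h.mono (Nat.zero_le j), h.zero]) hT

lemma width_mul_energy_le (h : ShellDecay I T A q s) (hA : 0 ≤ A) (hq : 0 ≤ q) (hT : 0 ≤ T)
    (hI : Monotone I) (hI0 : ∀ t ∈ Icc 0 T, 0 ≤ I t) (j : ℕ) :
    2 * (radius T s j - radius T s (j + 1)) * (I (radius T s j) - I (radius T s (j + 1)))
      ≤ A * q ^ j := by
  have hs := h.mono (Nat.le_add_right j 1)
  rcases le_or_gt (T - s j) 0 with hj | hj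
  · have h0 : radius T s j = 0 := max_eq_right hj
    have h1 : radius T s (j + 1) = 0 := max_eq_right (by linarith)
    simp only [h0, h1, sub_self, mul_zero]
    positivity
  have hrj : radius T s j = T - s j := max_eq_left hj.le
  have hanti := h.radius_antitone (Nat.le_add_right j 1)
  have hwidth : radius T s j - radius T s (j + 1) ≤ s (j + 1) - s j := by
    linarith [show T - s (j + 1) ≤ radius T s (j + 1) from le_max_left _ _]
  have henergy : I (radius T s j) - I (radius T s (j + 1)) ≤ I (T - s j) := by
    rw [hrj]
    linarith [hI0 (radius T s (j + 1)) ⟨le_max_right _ _, h.radius_le hT (j + 1)⟩]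
  calc 2 * (radius T s j - radius T s (j + 1)) * (I (radius T s j) - I (radius T s (j + 1)))
      ≤ 2 * (s (j + 1) - s j) * I (T - s j) := by
        gcongr
        linarith [hI hanti]
    _ ≤ A * q ^ j := h.decay j hj

theorem lintegral_Icc_le (h : ShellDecay I T A q s) (hA : 0 ≤ A) (hq : q ∈ Ico 0 1)
    (hT : 0 ≤ T) (hI : Monotone I) (hI0 : ∀ t ∈ Icc 0 T, 0 ≤ I t) {f : ℝ → ℝ}
    (hf : Measurable f) (hf0 : ∀ t, 0 ≤ f t)
    (hE : ∀ a b, 0 ≤ a → a ≤ b → b ≤ T →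
      ∫⁻ t in annulus a b, ENNReal.ofReal (f t ^ 2) ≤ ENNReal.ofReal (I b - I a)) :
    ∫⁻ t in Icc (-T) T, ENNReal.ofReal (f t) ≤ ENNReal.ofReal (√A / (1 - √q)) := by
  set r := radius T s
  obtain ⟨N, hN⟩ := h.exhausts
  have hcover : Icc (-T) T ⊆ ⋃ j, annulus (r (j + 1)) (r j) := by
    intro t ht
    refine annulus_subset_iUnion h.radius_antitone N ⟨?_, ?_⟩
    · simp only [radius, max_eq_right (sub_nonpos.2 hN), abs_nonneg]
    · simpa only [r, radius, h.zero, sub_zero, max_eq_left hT] using abs_le.2 ht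
  have hshell (j : ℕ) :
      ∫⁻ t in annulus (r (j + 1)) (r j), ENNReal.ofReal (f t) ≤ ENNReal.ofReal (√A * √q ^ j) := by
    have hanti := h.radius_antitone (Nat.le_add_right j 1)
    refine (lintegral_annulus_le_sqrt hf hf0 hanti (sub_nonneg.2 (hI hanti))
      (hE _ _ (le_max_right _ _) hanti (h.radius_le hT j))).trans (ENNReal.ofReal_le_ofReal ?_)
    have hsqrt_pow : √(q ^ j) = √q ^ j := by
      rw [← Real.sqrt_sq (pow_nonneg (Real.sqrt_nonneg q) j), ← pow_mul, mul_comm, pow_mul,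
        Real.sq_sqrt hq.1]
    rw [← hsqrt_pow, ← Real.sqrt_mul hA]
    exact Real.sqrt_le_sqrt (h.width_mul_energy_le hA hq.1 hT hI hI0 j)
  have hsqrt_q : √q < 1 := by simpa using Real.sqrt_lt_sqrt hq.1 hq.2
  calc ∫⁻ t in Icc (-T) T, ENNReal.ofReal (f t)
      ≤ ∫⁻ t in ⋃ j, annulus (r (j + 1)) (r j), ENNReal.ofReal (f t) := lintegral_mono_set hcover
    _ ≤ ∑' j, ∫⁻ t in annulus (r (j + 1)) (r j), ENNReal.ofReal (f t) := lintegral_iUnion_le _ _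
    _ ≤ ∑' j, ENNReal.ofReal (√A * √q ^ j) := ENNReal.tsum_le_tsum hshell
    _ = ENNReal.ofReal (√A / (1 - √q)) :=
        tsum_ofReal_mul_geometric (Real.sqrt_nonneg A) (Real.sqrt_nonneg q) hsqrt_q

end ShellDecay

section Decay

variable {α C T : ℝ} {I : ℝ → ℝ}

lemma le_pow_mul_of_le_mul_sub (hC : 0 ≤ C)
    (hrec : ∀ t ∈ Ioc 0 (T - 1), I t ≤ C * (I (t + 1) - I t)) (k : ℕ) :
    ∀ t, 0 < t → t + k ≤ T → I t ≤ (C / (C + 1)) ^ k * I (t + k) := by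
  induction k with
  | zero => simp
  | succ k ih =>
    intro t ht htk
    push_cast at htk
    have hstep : I t ≤ C / (C + 1) * I (t + 1) := by
      rw [div_mul_eq_mul_div, le_div_iff₀ (by linarith)]
      linarith [hrec t ⟨ht, by linarith⟩]
    calc I t ≤ C / (C + 1) * I (t + 1) := hstep
      _ ≤ C / (C + 1) * ((C / (C + 1)) ^ k * I (t + 1 + k)) := by
          gcongr
          exact ih (t + 1) (by linarith) (by linarith)
      _ = (C / (C + 1)) ^ (k + 1) * I (t + ↑(k + 1)) := by
          rw [Nat.cast_succ, add_comm (k : ℝ), ← add_assoc, pow_succ]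
          ring

theorem shellDecay_natCast (hC : 0 ≤ C)
    (hrec : ∀ t ∈ Ioc 0 (T - 1), I t ≤ C * (I (t + 1) - I t)) :
    ShellDecay I T (2 * I T) (C / (C + 1)) (↑) where
  mono := Nat.mono_cast
  zero := Nat.cast_zero
  exhausts := exists_nat_ge T
  decay j hj := by
    have h := le_pow_mul_of_le_mul_sub hC hrec j (T - j) hj (by linarith)
    rw [sub_add_cancel] at h
    push_cast
    linarith

lemma one_add_mul_self_le_rpow_one_add_of_nonpos {s p : ℝ} (hs : -1 < s) (hp1 : -1 ≤ p)
    (hp0 : p ≤ 0) : 1 + p * s ≤ (1 + s) ^ p := by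
  have hpos : 0 < 1 + s := by linarith
  have hu : 0 < (1 + s) ^ (-p) := Real.rpow_pos_of_pos hpos _
  have hB : (1 + s) ^ (-p) ≤ 1 + -p * s :=
    rpow_one_add_le_one_add_mul_self hs.le (by linarith) (by linarith)
  rw [show (1 + s) ^ p = ((1 + s) ^ (-p))⁻¹ by rw [Real.rpow_neg hpos.le, inv_inv],
    ← one_div, le_div_iff₀ hu]
  rcases le_total 0 (1 + p * s) with h | h
  · nlinarith [mul_le_mul_of_nonneg_left hB h, sq_nonneg (p * s)]
  · nlinarith

lemma rpow_sub_one_add_le_of_rpow_le_mul_sub {x y : ℝ} (hα : α ∈ Icc 0 1) (hC : 1 ≤ C)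
    (hx : 0 < x) (hxy : x ≤ y) (hy : y ≤ 1) (h : x ^ (2 - α) ≤ C * (y - x)) :
    y ^ (α - 1) + (1 - α) / (4 * C) ≤ x ^ (α - 1) := by
  obtain ⟨hα0, hα1⟩ := hα
  have hy0 : 0 < y := hx.trans_le hxy
  set P := y ^ (α - 1)
  have hP : 0 < P := Real.rpow_pos_of_pos hy0 _
  have htangent : P * (1 + (α - 1) * (x / y - 1)) ≤ x ^ (α - 1) := by
    have hB := one_add_mul_self_le_rpow_one_add_of_nonpos (s := x / y - 1) (p := α - 1)
      (by linarith [div_pos hx hy0]) (by linarith) (by linarith)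
    rw [add_sub_cancel, Real.div_rpow hx.le hy0.le] at hB
    calc P * (1 + (α - 1) * (x / y - 1)) ≤ P * (x ^ (α - 1) / P) := by gcongr
      _ = x ^ (α - 1) := by field_simp
  have hgain : 1 / (4 * C) ≤ P * (1 - x / y) := by
    rcases le_or_gt y (2 * x) with hcomp | hfar
    · have hy4 : y ^ (2 - α) ≤ 4 * x ^ (2 - α) :=
        calc y ^ (2 - α) ≤ (2 * x) ^ (2 - α) := by gcongr; linarith
          _ = 2 ^ (2 - α) * x ^ (2 - α) := Real.mul_rpow zero_le_two hx.le
          _ ≤ 2 ^ (2 : ℝ) * x ^ (2 - α) := by gcongr <;> linarith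
          _ = 4 * x ^ (2 - α) := by norm_num
      have hyP : y ^ (2 - α) * P = y := by
        rw [← Real.rpow_add hy0, show 2 - α + (α - 1) = 1 by ring, Real.rpow_one]
      have key : y ≤ 4 * C * (y - x) * P :=
        calc y = y ^ (2 - α) * P := hyP.symm
          _ ≤ 4 * x ^ (2 - α) * P := by gcongr
          _ ≤ 4 * (C * (y - x)) * P := by gcongr
          _ = 4 * C * (y - x) * P := by ring
      rw [show P * (1 - x / y) = (y - x) * P / y by field_simp, div_le_div_iff₀ (by positivity) hy0]
      linarith
    · have hP1 : 1 ≤ P := Real.one_le_rpow_of_pos_of_le_one_of_nonpos hy0 hy (by linarith)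
      have hxy2 : x / y < 1 / 2 := by rw [div_lt_iff₀ hy0]; linarith
      have hC4 : 1 / (4 * C) ≤ 1 / 4 := by gcongr; linarith
      nlinarith
  calc P + (1 - α) / (4 * C) = P + (1 - α) * (1 / (4 * C)) := by ring
    _ ≤ P + (1 - α) * (P * (1 - x / y)) := by gcongr
    _ = P * (1 + (α - 1) * (x / y - 1)) := by ring
    _ ≤ x ^ (α - 1) := htangent

lemma rpow_sub_one_add_nat_mul_le (hα : α ∈ Icc 0 1) (hC : 1 ≤ C) (hI : Monotone I)
    (hI1 : ∀ t ∈ Icc 0 T, I t ≤ 1)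
    (hrec : ∀ t ∈ Ioc 0 (T - 1), I t ^ (2 - α) ≤ C * (I (t + 1) - I t)) (k : ℕ) :
    ∀ t, 0 < t → t + k ≤ T → 0 < I t →
      I (t + k) ^ (α - 1) + k * ((1 - α) / (4 * C)) ≤ I t ^ (α - 1) := by
  induction k with
  | zero => simp
  | succ k ih =>
    intro t ht htk hIt
    push_cast at htk ⊢
    have hstep := rpow_sub_one_add_le_of_rpow_le_mul_sub hα hC hIt (hI (by linarith : t ≤ t + 1))
      (hI1 _ ⟨by linarith, by linarith⟩) (hrec t ⟨ht, by linarith⟩)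
    have hk := ih (t + 1) (by linarith) (by linarith) (hIt.trans_le (hI (by linarith)))
    rw [add_assoc, add_comm 1 (k : ℝ)] at hk
    linarith

lemma rpow_sub_one_add_mul_le (hα : α ∈ Icc 0 1) (hC : 1 ≤ C) (hI : Monotone I)
    (hI1 : ∀ t ∈ Icc 0 T, I t ≤ 1)
    (hrec : ∀ t ∈ Ioc 0 (T - 1), I t ^ (2 - α) ≤ C * (I (t + 1) - I t))
    {t : ℝ} (ht : 0 < t) (htT : t ≤ T) (hIt : 0 < I t) :
    I T ^ (α - 1) + (T - t - 1) * ((1 - α) / (4 * C)) ≤ I t ^ (α - 1) := by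
  set k := ⌊T - t⌋₊
  have hk : t + k ≤ T := by linarith [Nat.floor_le (sub_nonneg.2 htT)]
  have hdecay := rpow_sub_one_add_nat_mul_le hα hC hI hI1 hrec k t ht hk hIt
  have hIT : I T ^ (α - 1) ≤ I (t + k) ^ (α - 1) :=
    Real.rpow_le_rpow_of_nonpos (hIt.trans_le (hI (by simp))) (hI hk) (by linarith [hα.2])
  have hc : 0 ≤ (1 - α) / (4 * C) := div_nonneg (by linarith [hα.2]) (by linarith)
  nlinarith [mul_le_mul_of_nonneg_right (Nat.sub_one_lt_floor (T - t)).le hc]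

/-- With `c = (1 - α) / (4 * C)` and `L = I T ^ (α - 1)`, the recursion forces
`I ^ (α - 1) ≥ 2 ^ j * L / 2` at the outer radius of the shell of width `2 ^ j * L / c`, i.e.
`I ≤ ρ ^ (j - 1) * I T` for `ρ = 2 ^ (α - 1)⁻¹ < 1 / 2`; width times energy therefore decays like
`(2 * ρ) ^ j`. -/
theorem exists_shellDecay_dyadic (hα : α ∈ Ioo 0 1) (hC : 1 ≤ C) (hT : 0 < T) (hI : Monotone I)
    (hI01 : ∀ t ∈ Icc 0 T, 0 ≤ I t ∧ I t ≤ 1)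
    (hrec : ∀ t ∈ Ioc 0 (T - 1), I t ^ (2 - α) ≤ C * (I (t + 1) - I t)) :
    ∃ s, ShellDecay I T (8 * C / ((1 - α) * 2 ^ (α - 1)⁻¹) * I T ^ α) (2 * 2 ^ (α - 1)⁻¹) s := by
  obtain ⟨hα0, hα1⟩ := hα
  set J := I T
  set ρ : ℝ := 2 ^ (α - 1)⁻¹
  have hρ : 0 < ρ := by positivity
  have hK : 0 ≤ 8 * C / ((1 - α) * ρ) := div_nonneg (by linarith) (mul_pos (by linarith) hρ).le
  obtain hJ | hJ := (hI01 T ⟨hT.le, le_rfl⟩).1.eq_or_lt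
  · refine ⟨(↑), Nat.mono_cast, Nat.cast_zero, exists_nat_ge T, fun j hj => ?_⟩
    have hIj : I (T - j) ≤ 0 := hJ ▸ hI (by linarith)
    rw [show J = 0 from hJ.symm, Real.zero_rpow hα0.ne', mul_zero, zero_mul]
    push_cast
    linarith
  set L := J ^ (α - 1)
  set c := (1 - α) / (4 * C)
  have hc : 0 < c := div_pos (by linarith) (by linarith)
  have hc4 : c ≤ 1 / 4 := by rw [div_le_div_iff₀ (by linarith) (by norm_num)]; linarith
  have hL : 1 ≤ L := Real.one_le_rpow_of_pos_of_le_one_of_nonpos hJ (hI01 T ⟨hT.le, le_rfl⟩).2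
    (by linarith)
  have hLc : 1 ≤ L / c := by rw [le_div_iff₀ hc]; linarith
  refine ⟨fun j => (2 ^ j - 1) * (L / c), fun i j hij => ?_, by simp, ?_, fun j hj => ?_⟩
  · have : (2 : ℝ) ^ i ≤ 2 ^ j := pow_le_pow_right₀ one_le_two hij
    gcongr
  · obtain ⟨N, hN⟩ := exists_nat_ge T
    have hN2 : (N : ℝ) + 1 ≤ 2 ^ N := by exact_mod_cast Nat.lt_two_pow_self
    exact ⟨N, by nlinarith⟩
  set t := T - (2 ^ j - 1) * (L / c)
  have h2j : (1 : ℝ) ≤ 2 ^ j := one_le_pow₀ one_le_two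
  rw [show (2 ^ (j + 1) - 1) * (L / c) - (2 ^ j - 1) * (L / c) = 2 ^ j * (L / c) by ring]
  rcases le_or_gt (I t) 0 with hIt | hIt
  · calc 2 * (2 ^ j * (L / c)) * I t ≤ 0 := mul_nonpos_of_nonneg_of_nonpos (by positivity) hIt
      _ ≤ _ := by positivity
  have hρα : ρ ^ (α - 1) = 2 := Real.rpow_inv_rpow zero_le_two (by linarith)
  have hlow : (ρ ^ j * J / ρ) ^ (α - 1) ≤ I t ^ (α - 1) :=
    calc (ρ ^ j * J / ρ) ^ (α - 1) = 2 ^ j * L / 2 := by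
          rw [Real.div_rpow (by positivity) hρ.le, Real.mul_rpow (by positivity) hJ.le,
            ← Real.rpow_pow_comm hρ.le, hρα]
      _ ≤ L + (T - t - 1) * c := by
          have hTt : (T - t - 1) * c = (2 ^ j - 1) * L - c := by
            simp only [t, sub_sub_cancel]
            field_simp
          rw [hTt]
          nlinarith
      _ ≤ I t ^ (α - 1) := rpow_sub_one_add_mul_le ⟨hα0.le, hα1.le⟩ hC hI
          (fun t ht => (hI01 t ht).2) hrec hj (by simp only [t]; nlinarith) hIt
  have hIt_le : I t ≤ ρ ^ j * J / ρ :=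
    (Real.rpow_le_rpow_iff_of_neg (by positivity) hIt (by linarith)).1 hlow
  calc 2 * (2 ^ j * (L / c)) * I t ≤ 2 * (2 ^ j * (L / c)) * (ρ ^ j * J / ρ) := by gcongr
    _ = 8 * C / ((1 - α) * ρ) * J ^ α * (2 * ρ) ^ j := by
        rw [show L = J ^ α / J from Real.rpow_sub_one hJ.ne' α, mul_pow]
        have hJ0 : J ≠ 0 := hJ.ne'
        simp only [c]
        field_simp
        ring

theorem exists_shellDecay (hα : α ∈ Ioc 0 1) (hC : 1 ≤ C) :
    ∃ K > 0, ∃ q ∈ Ico (0 : ℝ) 1, ∀ T > 0, ∀ I : ℝ → ℝ, Monotone I →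
      (∀ t ∈ Icc 0 T, 0 ≤ I t ∧ I t ≤ 1) →
      (∀ t ∈ Ioc 0 (T - 1), I t ^ (2 - α) ≤ C * (I (t + 1) - I t)) →
      ∃ s, ShellDecay I T (K * I T ^ α) q s := by
  obtain ⟨hα0, hα1⟩ := hα
  rcases hα1.lt_or_eq with hlt | rfl
  · have hexp : (α - 1)⁻¹ < -1 :=
      (inv_lt_of_neg (by linarith) (by norm_num)).2 (by norm_num; linarith)
    have hρ : (2 : ℝ) ^ (α - 1)⁻¹ < 2⁻¹ := by
      simpa [Real.rpow_neg_one] using Real.rpow_lt_rpow_of_exponent_lt one_lt_two hexp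
    refine ⟨8 * C / ((1 - α) * 2 ^ (α - 1)⁻¹),
      div_pos (by linarith) (mul_pos (by linarith) (by positivity)), 2 * 2 ^ (α - 1)⁻¹,
      ⟨by positivity, by linarith⟩, fun T hT I hI hI01 hrec => ?_⟩
    exact exists_shellDecay_dyadic ⟨hα0, hlt⟩ hC hT hI hI01 hrec
  · refine ⟨2, two_pos, C / (C + 1), ⟨by positivity, (div_lt_one (by linarith)).2 (by linarith)⟩,
      fun T _ I _ _ hrec => ⟨(↑), ?_⟩⟩
    have hrec' (t : ℝ) (ht : t ∈ Ioc 0 (T - 1)) : I t ≤ C * (I (t + 1) - I t) := by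
      simpa [show (2 : ℝ) - 1 = 1 by norm_num] using hrec t ht
    simpa only [Real.rpow_one] using shellDecay_natCast (by linarith) hrec'

end Decay

end DiniEstimate

open DiniEstimate

/-- Abstract Dini-type estimate: for `α ∈ (0,1]` and `C ≥ 1` there is
`C' > 0` such that for all `T ≥ 1`, if `I` is nondecreasing with `0 ≤ I ≤ 1` on
`[0,T]` and satisfies `I(t)^{2-α} ≤ C (I(t+1) - I(t))` on `(0, T-1]`, and if
`f ≥ 0` is measurable with `∫_{a ≤ |t| ≤ b} f² ≤ I(b) - I(a)` for all
`0 ≤ a ≤ b ≤ T`, then `∫_{-T}^{T} f ≤ C' I(T)^{α/2}`. -/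
theorem dini_type_estimate (α C : ℝ) (hα : α ∈ Set.Ioc (0 : ℝ) 1) (hC : 1 ≤ C) :
    ∃ C' > (0 : ℝ), ∀ T : ℝ, 1 ≤ T →
      ∀ I : ℝ → ℝ, Monotone I →
        (∀ t ∈ Set.Icc (0 : ℝ) T, 0 ≤ I t ∧ I t ≤ 1) →
        (∀ t ∈ Set.Ioc (0 : ℝ) (T - 1), I t ^ (2 - α) ≤ C * (I (t + 1) - I t)) →
        ∀ f : ℝ → ℝ, Measurable f → (∀ t, 0 ≤ f t) →
          (∀ a b : ℝ, 0 ≤ a → a ≤ b → b ≤ T →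
            ∫⁻ t in {t : ℝ | a ≤ |t| ∧ |t| ≤ b}, ENNReal.ofReal ((f t) ^ 2)
              ≤ ENNReal.ofReal (I b - I a)) →
          ∫⁻ t in Set.Icc (-T) T, ENNReal.ofReal (f t)
            ≤ ENNReal.ofReal (C' * I T ^ (α / 2)) := by
  obtain ⟨K, hK, q, hq, hshells⟩ := exists_shellDecay hα hC
  have hsqrt_q : √q < 1 := by simpa using Real.sqrt_lt_sqrt hq.1 hq.2
  refine ⟨√K / (1 - √q), div_pos (Real.sqrt_pos.2 hK) (by linarith),
    fun T hT I hI hI01 hrec f hf hf0 hE => ?_⟩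
  obtain ⟨s, hs⟩ := hshells T (by linarith) I hI hI01 hrec
  have hIT := (hI01 T ⟨by linarith, le_rfl⟩).1
  calc ∫⁻ t in Icc (-T) T, ENNReal.ofReal (f t) ≤ ENNReal.ofReal (√(K * I T ^ α) / (1 - √q)) :=
        hs.lintegral_Icc_le (by positivity) hq (by linarith) hI (fun t ht => (hI01 t ht).1) hf hf0
          hE
    _ = ENNReal.ofReal (√K / (1 - √q) * I T ^ (α / 2)) := by
        rw [Real.sqrt_mul hK.le, Real.sqrt_eq_rpow (I T ^ α), ← Real.rpow_mul hIT]
        ring_nf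
end

section
/- Let α ∈ (0,1) and C ≥ 1. There exists a constant C' = C'(α, C) > 0 such that the following holds. Let I : (0, 1/2] → ℝ be nondecreasing with 0 ≤ I(ρ) ≤ 1 for all ρ ∈ (0, 1/2], and suppose that I(ρ)^{2-α} ≤ C (I(2ρ) - I(ρ)) for all ρ ∈ (0, 1/4]. Then I(ρ) ≤ C' (log(1/ρ))^{-1/(1-α)} for all ρ ∈ (0, 1/4]. -/
/-!
With `β = 1 - α`, the inequality `I(ρ)^(1+β) ≤ C (I(2ρ) - I(ρ))` says that along the dyadic
radii `2^(-k-2)` the quantity `I^(-β)` grows by at least the fixed amount `β / (1 + C)` per step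
(by Bernoulli's inequality `(x/y)^β ≤ 1 + β (x/y - 1)`). Hence `I(2^(-k-2)) ≲ k^(-1/β)`, and
monotonicity of `I` transfers this to `I(ρ) ≲ (log (1/ρ))^(-1/β)`.
-/

open Real

section

variable {β C : ℝ} {a : ℕ → ℝ}

theorem rpow_neg_add_le_rpow_neg_of_rpow_le_mul_sub {x y : ℝ} (hβ0 : 0 < β) (hβ1 : β ≤ 1)
    (hC : 0 < C) (hx : 0 < x) (hx1 : x ≤ 1) (hxy : x ≤ y) (h : x ^ (1 + β) ≤ C * (y - x)) :
    y ^ (-β) + β / (1 + C) ≤ x ^ (-β) := by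
  have hy : 0 < y := hx.trans_le hxy
  set t := x / y with ht_def
  have bernoulli : β * (1 - t) ≤ 1 - t ^ β := by
    have := rpow_one_add_le_one_add_mul_self (s := t - 1)
      (by linarith [div_pos hx hy]) hβ0.le hβ1
    rw [add_sub_cancel] at this
    linarith
  have hy_rpow : y ^ (-β) = x ^ (-β) * t ^ β := by
    rw [div_rpow hx.le hy.le, rpow_neg hx.le, rpow_neg hy.le]
    field_simp
  have hu : 1 ≤ x ^ (-β) := one_le_rpow_of_pos_of_le_one_of_nonpos hx hx1 (by linarith)
  have ht_le : t ≤ C * (x ^ (-β) * (1 - t)) := by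
    have hx_eq : x ^ (-β) * x ^ (1 + β) = x := by
      rw [← rpow_add hx, neg_add_cancel_comm_assoc, rpow_one]
    calc t = x ^ (-β) * x ^ (1 + β) / y := by rw [hx_eq]
      _ ≤ x ^ (-β) * (C * (y - x)) / y := by gcongr
      _ = C * (x ^ (-β) * (1 - t)) := by rw [ht_def]; field_simp
  -- `t` and `1 - t` are both at most multiples of `x ^ (-β) * (1 - t)`, and they add up to `1`.
  have key : 1 ≤ (1 + C) * (x ^ (-β) * (1 - t)) := by
    nlinarith [div_le_one_of_le₀ hxy hy.le]
  calc y ^ (-β) + β / (1 + C) ≤ y ^ (-β) + β * (x ^ (-β) * (1 - t)) := by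
        gcongr
        rw [div_le_iff₀ (by positivity)]
        nlinarith
    _ ≤ x ^ (-β) := by rw [hy_rpow]; nlinarith

theorem one_add_mul_le_rpow_neg_of_rpow_le_mul_sub (hβ0 : 0 < β) (hβ1 : β ≤ 1) (hC : 0 < C)
    (ha : Antitone a) (ha1 : a 0 ≤ 1) (h : ∀ k, a (k + 1) ^ (1 + β) ≤ C * (a k - a (k + 1)))
    {k : ℕ} (hk : 0 < a k) :
    1 + β / (1 + C) * k ≤ a k ^ (-β) := by
  induction k with
  | zero => simpa using one_le_rpow_of_pos_of_le_one_of_nonpos hk ha1 (by linarith)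
  | succ k ih =>
    have step := rpow_neg_add_le_rpow_neg_of_rpow_le_mul_sub hβ0 hβ1 hC hk
      ((ha (Nat.zero_le _)).trans ha1) (ha k.le_succ) (h k)
    push_cast
    linarith [ih (hk.trans_le (ha k.le_succ))]

theorem le_one_add_mul_rpow_of_rpow_le_mul_sub (hβ0 : 0 < β) (hβ1 : β ≤ 1) (hC : 0 < C)
    (ha : Antitone a) (ha0 : ∀ k, 0 ≤ a k) (ha1 : a 0 ≤ 1)
    (h : ∀ k, a (k + 1) ^ (1 + β) ≤ C * (a k - a (k + 1))) (k : ℕ) :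
    a k ≤ (1 + β / (1 + C) * k) ^ (-(1 / β)) := by
  rcases (ha0 k).eq_or_lt with hk | hk
  · rw [← hk]
    positivity
  calc a k = (a k ^ (-β)) ^ (-(1 / β)) := by
        rw [← rpow_mul hk.le, neg_mul_neg, mul_one_div_cancel hβ0.ne', rpow_one]
    _ ≤ (1 + β / (1 + C) * k) ^ (-(1 / β)) :=
      rpow_le_rpow_of_nonpos (by positivity)
        (one_add_mul_le_rpow_neg_of_rpow_le_mul_sub hβ0 hβ1 hC ha ha1 h hk)
        (by simp only [neg_nonpos]; positivity)

end

theorem exists_le_half_pow_and_log_inv_le {ρ : ℝ} (hρ0 : 0 < ρ) (hρ : ρ ≤ 1 / 4) :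
    ∃ k : ℕ, ρ ≤ (1 / 2) ^ (k + 2) ∧ log (1 / ρ) ≤ (k + 3) * log 2 := by
  obtain ⟨k, hk_le, hk_lt⟩ := exists_nat_pow_near (x := 1 / (4 * ρ)) (y := (2 : ℝ))
    (by rw [le_div_iff₀ (by positivity)]; linarith) one_lt_two
  refine ⟨k, ?_, ?_⟩
  · rw [le_div_iff₀ (by positivity)] at hk_le
    rw [one_div_pow, le_div_iff₀ (by positivity), pow_add]
    linarith
  · rw [← Nat.cast_ofNat, ← Nat.cast_add, ← log_pow]
    refine log_le_log (by positivity) ?_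
    rw [div_lt_iff₀ (by positivity)] at hk_lt
    rw [div_le_iff₀ hρ0]
    calc (1 : ℝ) ≤ 2 ^ (k + 1) * (4 * ρ) := hk_lt.le
      _ = 2 ^ (k + 3) * ρ := by ring

theorem half_pow_add_two_mem_Ioc (k : ℕ) : (1 / 2 : ℝ) ^ (k + 2) ∈ Set.Ioc 0 (1 / 4) :=
  ⟨by positivity, (pow_le_pow_of_le_one (by norm_num) (by norm_num) (by omega : 2 ≤ k + 2)).trans_eq
    (by norm_num)⟩

theorem half_pow_add_two_le_one_add_mul_rpow {β C : ℝ} {I : ℝ → ℝ} (hβ0 : 0 < β) (hβ1 : β ≤ 1)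
    (hC : 0 < C) (hmono : MonotoneOn I (Set.Ioc 0 (1 / 2)))
    (hbound : ∀ ρ ∈ Set.Ioc (0 : ℝ) (1 / 2), 0 ≤ I ρ ∧ I ρ ≤ 1)
    (hrec : ∀ ρ ∈ Set.Ioc (0 : ℝ) (1 / 4), I ρ ^ (1 + β) ≤ C * (I (2 * ρ) - I ρ)) (k : ℕ) :
    I ((1 / 2) ^ (k + 2)) ≤ (1 + β / (1 + C) * k) ^ (-(1 / β)) := by
  have mem (k : ℕ) : (1 / 2 : ℝ) ^ (k + 2) ∈ Set.Ioc 0 (1 / 2) :=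
    Set.Ioc_subset_Ioc_right (by norm_num) (half_pow_add_two_mem_Ioc k)
  refine le_one_add_mul_rpow_of_rpow_le_mul_sub (a := fun k ↦ I ((1 / 2) ^ (k + 2))) hβ0 hβ1 hC
    (antitone_nat_of_succ_le fun k ↦
      hmono (mem _) (mem _) (pow_le_pow_of_le_one (by norm_num) (by norm_num) (by omega)))
    (fun k ↦ (hbound _ (mem k)).1) (hbound _ (mem 0)).2 (fun k ↦ ?_) k
  convert hrec _ (half_pow_add_two_mem_Ioc (k + 1)) using 4
  ring

/-- Iteration lemma (non-integrable case): for `α ∈ (0,1)` and `C ≥ 1` there is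
`C' > 0` such that if `I` is nondecreasing on `(0, 1/2]` with `0 ≤ I ≤ 1` there
and `I(ρ)^{2-α} ≤ C (I(2ρ) - I(ρ))` for `ρ ∈ (0, 1/4]`, then
`I(ρ) ≤ C' (log(1/ρ))^{-1/(1-α)}` for all `ρ ∈ (0, 1/4]`. -/
theorem log_decay_of_lojasiewicz (α C : ℝ) (hα : α ∈ Set.Ioo (0 : ℝ) 1)
    (hC : 1 ≤ C) :
    ∃ C' > (0 : ℝ), ∀ I : ℝ → ℝ,
      MonotoneOn I (Set.Ioc (0 : ℝ) (1 / 2)) →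
      (∀ ρ ∈ Set.Ioc (0 : ℝ) (1 / 2), 0 ≤ I ρ ∧ I ρ ≤ 1) →
      (∀ ρ ∈ Set.Ioc (0 : ℝ) (1 / 4), I ρ ^ (2 - α) ≤ C * (I (2 * ρ) - I ρ)) →
      ∀ ρ ∈ Set.Ioc (0 : ℝ) (1 / 4),
        I ρ ≤ C' * Real.log (1 / ρ) ^ (-(1 / (1 - α))) := by
  obtain ⟨hα0, hα1⟩ := hα
  have hβ0 : 0 < 1 - α := by linarith
  have hC0 : 0 < C := by linarith
  set c := (1 - α) / (1 + C)
  have hc0 : 0 < c := by positivity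
  have hc1 : c ≤ 1 := div_le_one_of_le₀ (by linarith) (by linarith)
  refine ⟨(c / (3 * log 2)) ^ (-(1 / (1 - α))), by positivity,
    fun I hmono hbound hrec ρ ⟨hρ0, hρ⟩ ↦ ?_⟩
  obtain ⟨k, hρk, hlog⟩ := exists_le_half_pow_and_log_inv_le hρ0 hρ
  have hlog0 : 0 < log (1 / ρ) := log_pos (by rw [lt_div_iff₀ hρ0]; linarith)
  have hscale : c / (3 * log 2) * log (1 / ρ) ≤ 1 + c * k := by
    calc c / (3 * log 2) * log (1 / ρ) ≤ c / (3 * log 2) * ((k + 3) * log 2) := by gcongr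
      _ = c * (k + 3) / 3 := by field_simp
      _ ≤ 1 + c * k := by linarith [mul_nonneg hc0.le k.cast_nonneg]
  calc I ρ ≤ I ((1 / 2) ^ (k + 2)) :=
        hmono ⟨hρ0, by linarith⟩
          (Set.Ioc_subset_Ioc_right (by norm_num) (half_pow_add_two_mem_Ioc k)) hρk
    _ ≤ (1 + c * k) ^ (-(1 / (1 - α))) :=
        half_pow_add_two_le_one_add_mul_rpow hβ0 (by linarith) hC0 hmono hbound
          (by simpa only [show 2 - α = 1 + (1 - α) by ring] using hrec) k
    _ ≤ (c / (3 * log 2) * log (1 / ρ)) ^ (-(1 / (1 - α))) :=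
        rpow_le_rpow_of_nonpos (by positivity) hscale (by simp only [neg_nonpos]; positivity)
    _ = (c / (3 * log 2)) ^ (-(1 / (1 - α))) * log (1 / ρ) ^ (-(1 / (1 - α))) :=
        mul_rpow (by positivity) hlog0.le
end

section
/- Let n ≥ 2, let U ⊆ ℝⁿ be open and connected, and let K ⊆ ℝⁿ be a set whose (n-1)-dimensional Hausdorff measure is zero. Then U \ K is path-connected (in particular, connected). -/
/-!
If `a ∉ K`, every point `z` whose segment `[a, z]` meets `K` lies in the image of `ℝ × K` under
the smooth cone map `(t, k) ↦ a + t • (k - a)`. Cover `K` by sets `t` of diameter at most `r > 0`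
with `∑ r ^ (n-1)` small; each `[m, m + 1] × t` is covered by `⌊1 / r⌋ + 1` pieces of diameter at
most `r`, so `μH[n] (ℝ × K) = 0`. Locally Lipschitz maps preserve `μH[n]`-null sets, so these
shadows of `K` are null. As `μH[n]` is a Haar measure on `ℝⁿ`, a ball contains a point `z` outside
the shadows of two given points `x, y ∉ K`, and `x → z → y` avoids `K`. Since `K` is null,
`U \ K` is dense in `U`, and chaining these local paths along the connected set `U` joins any two
of its points.
-/

open Set Filter Topology MeasureTheory Metric
open scoped ENNReal NNReal

theorem Metric.ediam_prod_le {α β : Type*} [PseudoEMetricSpace α] [PseudoEMetricSpace β]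
    (s : Set α) (t : Set β) : ediam (s ×ˢ t) ≤ max (ediam s) (ediam t) :=
  ediam_le fun _ hp _ hq => max_le_max (edist_le_ediam_of_mem hp.1 hq.1)
    (edist_le_ediam_of_mem hp.2 hq.2)

theorem exists_cover_Icc_prod {X : Type*} [EMetricSpace X] {d : ℝ} (hd : 0 ≤ d) {a b : ℝ}
    (hab : a ≤ b) {t : Set X} {r : ℝ≥0} (hr : 0 < r) (ht : ediam t ≤ r) :
    ∃ J : ℕ → Set (ℝ × X), Icc a b ×ˢ t ⊆ ⋃ k, J k ∧
      ∑' k, ediam (J k) ^ (d + 1) ≤ (ENNReal.ofReal (b - a) + r) * (r : ℝ≥0∞) ^ d := by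
  have hr' : (0 : ℝ) < r := hr
  set M := ⌊(b - a) / r⌋₊
  set J : ℕ → Set (ℝ × X) := fun k =>
    if k ≤ M then Icc (a + k * r) (a + (k + 1) * r) ×ˢ t else ∅
  refine ⟨J, ?_, ?_⟩
  · rintro ⟨x, y⟩ ⟨hx, hy⟩
    have hxa : 0 ≤ (x - a) / r := div_nonneg (sub_nonneg.2 hx.1) hr'.le
    have hk : ⌊(x - a) / r⌋₊ ≤ M :=
      Nat.floor_le_floor (div_le_div_of_nonneg_right (by linarith [hx.2]) hr'.le)
    refine mem_iUnion.2 ⟨⌊(x - a) / r⌋₊, ?_⟩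
    simp only [J, if_pos hk]
    refine ⟨⟨?_, ?_⟩, hy⟩
    · linarith [(le_div_iff₀ hr').1 (Nat.floor_le hxa)]
    · linarith [(div_lt_iff₀ hr').1 (Nat.lt_floor_add_one ((x - a) / r))]
  · have hpiece : ∀ k, ediam (J k) ≤ r := fun k => by
      simp only [J]
      split_ifs
      · exact (ediam_prod_le _ _).trans (max_le (by simp [add_mul]) ht)
      · simp
    have hMr : (M : ℝ≥0∞) * r ≤ ENNReal.ofReal (b - a) := by
      rw [← ENNReal.ofReal_natCast, ← ENNReal.ofReal_coe_nnreal,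
        ← ENNReal.ofReal_mul (by positivity)]
      exact ENNReal.ofReal_le_ofReal
        ((le_div_iff₀ hr').1 (Nat.floor_le (div_nonneg (sub_nonneg.2 hab) hr'.le)))
    rw [tsum_eq_sum (s := Finset.range (M + 1)) fun k hk => by
      simp [J, Nat.lt_succ_iff.not.1 (Finset.mem_range.not.1 hk),
        ENNReal.zero_rpow_of_pos (by linarith : 0 < d + 1)]]
    calc ∑ k ∈ Finset.range (M + 1), ediam (J k) ^ (d + 1)
        ≤ ∑ k ∈ Finset.range (M + 1), (r : ℝ≥0∞) ^ (d + 1) :=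
          Finset.sum_le_sum fun k _ => ENNReal.rpow_le_rpow (hpiece k) (by linarith)
      _ = ((M : ℝ≥0∞) * r + r) * (r : ℝ≥0∞) ^ d := by
          rw [Finset.sum_const, Finset.card_range, nsmul_eq_mul,
            ENNReal.rpow_add _ _ (by simpa using hr.ne') (by simp), ENNReal.rpow_one]
          push_cast
          ring
      _ ≤ (ENNReal.ofReal (b - a) + r) * (r : ℝ≥0∞) ^ d := by gcongr

namespace MeasureTheory.Measure

variable {X : Type*} [EMetricSpace X] [MeasurableSpace X] [BorelSpace X] {d : ℝ} {s : Set X}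

theorem hausdorffMeasure_eq_zero_of_forall_cover {ι : Type*} [Countable ι] (hd : 0 < d)
    (h : ∀ ε > 0, ∃ t : ι → Set X, s ⊆ ⋃ i, t i ∧ ∑' i, ediam (t i) ^ d < ε) :
    μH[d] s = 0 := by
  choose t hst hsum using fun j : ℕ => h (j : ℝ≥0∞)⁻¹ (by simp)
  have hdiam : ∀ j i, ediam (t j i) ≤ ((j : ℝ≥0∞)⁻¹) ^ d⁻¹ := fun j i =>
    (ENNReal.le_rpow_inv_iff hd).2 ((ENNReal.le_tsum i).trans (hsum j).le)
  have hr : Tendsto (fun j : ℕ => ((j : ℝ≥0∞)⁻¹) ^ d⁻¹) atTop (𝓝 0) := by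
    have := ((ENNReal.continuous_rpow_const (y := d⁻¹)).tendsto 0).comp
      ENNReal.tendsto_inv_nat_nhds_zero
    rwa [ENNReal.zero_rpow_of_pos (inv_pos.2 hd)] at this
  refine nonpos_iff_eq_zero.1 ?_
  calc μH[d] s ≤ liminf (fun j => ∑' i, ediam (t j i) ^ d) atTop :=
        hausdorffMeasure_le_liminf_tsum d s _ hr t (.of_forall hdiam) (.of_forall hst)
    _ ≤ liminf (fun j : ℕ => (j : ℝ≥0∞)⁻¹) atTop :=
        liminf_le_liminf (.of_forall fun j => (hsum j).le)
    _ = 0 := ENNReal.tendsto_inv_nat_nhds_zero.liminf_eq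

theorem exists_cover_of_hausdorffMeasure_eq_zero (hd : 0 < d) (hs : μH[d] s = 0) {ε : ℝ≥0∞}
    (hε : 0 < ε) : ∃ t : ℕ → Set X, s ⊆ ⋃ n, t n ∧ ∑' n, ediam (t n) ^ d < ε := by
  -- `μH[d]` dominates the covering content at scale `⊤`, where diameters are unconstrained.
  have hcontent : (⨅ (t : ℕ → Set X) (_ : s ⊆ ⋃ n, t n) (_ : ∀ n, ediam (t n) ≤ ⊤),
      ∑' n, ⨆ _ : (t n).Nonempty, ediam (t n) ^ d) < ε := by
    refine lt_of_le_of_lt ?_ hε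
    rw [← hs, hausdorffMeasure_apply]
    exact le_iSup₂ (f := fun (r : ℝ≥0∞) (_ : 0 < r) =>
      ⨅ (t : ℕ → Set X) (_ : s ⊆ ⋃ n, t n) (_ : ∀ n, ediam (t n) ≤ r),
        ∑' n, ⨆ _ : (t n).Nonempty, ediam (t n) ^ d) ⊤ ENNReal.zero_lt_top
  simp only [iInf_lt_iff, le_top, implies_true, exists_const] at hcontent
  obtain ⟨t, hst, hsum⟩ := hcontent
  refine ⟨t, hst, lt_of_le_of_lt (ENNReal.tsum_le_tsum fun n => ?_) hsum⟩
  rcases (t n).eq_empty_or_nonempty with h | h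
  · simp [h, ENNReal.zero_rpow_of_pos hd]
  · simp [h]

theorem exists_cover_pos_radius_of_hausdorffMeasure_eq_zero (hd : 0 < d) (hs : μH[d] s = 0)
    {ε : ℝ≥0∞} (hε : 0 < ε) :
    ∃ (t : ℕ → Set X) (r : ℕ → ℝ≥0), s ⊆ ⋃ n, t n ∧ (∀ n, 0 < r n ∧ ediam (t n) ≤ r n) ∧
      ∑' n, (r n : ℝ≥0∞) ^ d < ε := by
  have hε2 : 0 < ε / 2 := ENNReal.half_pos hε.ne'
  obtain ⟨t, hst, hsum⟩ := exists_cover_of_hausdorffMeasure_eq_zero hd hs hε2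
  obtain ⟨η, hη, hηsum⟩ := ENNReal.exists_pos_sum_of_countable hε2.ne' ℕ
  have hfin : ∀ n, ediam (t n) ^ d ≠ ⊤ := fun n =>
    ((ENNReal.le_tsum n).trans_lt (hsum.trans_le le_top)).ne
  set r : ℕ → ℝ≥0 := fun n => ((ediam (t n) ^ d).toNNReal + η n) ^ d⁻¹
  have hr : ∀ n, (r n : ℝ≥0∞) ^ d = ediam (t n) ^ d + η n := fun n => by
    rw [← ENNReal.coe_rpow_of_nonneg _ hd.le, NNReal.rpow_inv_rpow hd.ne', ENNReal.coe_add,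
      ENNReal.coe_toNNReal (hfin n)]
  refine ⟨t, r, hst, fun n => ⟨NNReal.rpow_pos (add_pos_of_nonneg_of_pos zero_le (hη n)), ?_⟩,
    ?_⟩
  · rw [← ENNReal.rpow_le_rpow_iff hd, hr]
    exact le_self_add
  · calc ∑' n, (r n : ℝ≥0∞) ^ d = ∑' n, ediam (t n) ^ d + ∑' n, (η n : ℝ≥0∞) := by
          simp only [hr, ENNReal.tsum_add]
      _ < ε / 2 + ε / 2 := ENNReal.add_lt_add hsum hηsum
      _ = ε := ENNReal.add_halves ε

theorem hausdorffMeasure_Icc_prod_eq_zero (hd : 0 < d) {a b : ℝ} (hab : a ≤ b) {B : Set X}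
    (hB : μH[d] B = 0) : μH[d + 1] (Icc a b ×ˢ B) = 0 := by
  refine hausdorffMeasure_eq_zero_of_forall_cover (ι := ℕ × ℕ) (by linarith) fun ε hε => ?_
  set C := ENNReal.ofReal (b - a) + 1
  have hC0 : C ≠ 0 := by simp [C]
  have hCtop : C ≠ ⊤ := by simp [C]
  obtain ⟨t, r, hBt, hr, hsum⟩ := exists_cover_pos_radius_of_hausdorffMeasure_eq_zero hd hB
    (lt_min (ENNReal.div_pos hε.ne' hCtop) one_pos)
  have hr1 : ∀ n, (r n : ℝ≥0∞) ≤ 1 := fun n => by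
    by_contra! h
    exact ((ENNReal.one_lt_rpow h hd).trans_le (ENNReal.le_tsum n)).not_gt
      (hsum.trans_le (min_le_right _ _))
  choose J hJ hJsum using fun n => exists_cover_Icc_prod hd.le hab (hr n).1 (hr n).2
  refine ⟨fun p => J p.1 p.2, ?_, ?_⟩
  · rintro ⟨x, y⟩ ⟨hx, hy⟩
    obtain ⟨n, hn⟩ := mem_iUnion.1 (hBt hy)
    obtain ⟨k, hk⟩ := mem_iUnion.1 (hJ n ⟨hx, hn⟩)
    exact mem_iUnion.2 ⟨(n, k), hk⟩
  · calc ∑' p : ℕ × ℕ, ediam (J p.1 p.2) ^ (d + 1)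
        = ∑' n, ∑' k, ediam (J n k) ^ (d + 1) :=
          ENNReal.tsum_prod (f := fun n k => ediam (J n k) ^ (d + 1))
      _ ≤ ∑' n, C * (r n : ℝ≥0∞) ^ d :=
          ENNReal.tsum_le_tsum fun n =>
            (hJsum n).trans (mul_le_mul_left (add_le_add_right (hr1 n) _) _)
      _ = C * ∑' n, (r n : ℝ≥0∞) ^ d := ENNReal.tsum_mul_left
      _ < C * (ε / C) :=
          ENNReal.mul_lt_mul_right hC0 hCtop (hsum.trans_le (min_le_left _ _))
      _ ≤ ε := ENNReal.mul_div_le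

theorem hausdorffMeasure_univ_prod_eq_zero (hd : 0 < d) {B : Set X} (hB : μH[d] B = 0) :
    μH[d + 1] ((univ : Set ℝ) ×ˢ B) = 0 := by
  rw [← iUnion_Icc_intCast, iUnion_prod_const]
  exact measure_iUnion_null fun m => hausdorffMeasure_Icc_prod_eq_zero hd (by linarith) hB

end MeasureTheory.Measure

theorem LocallyLipschitz.hausdorffMeasure_image_eq_zero {X Y : Type*} [EMetricSpace X]
    [MeasurableSpace X] [BorelSpace X] [LindelofSpace X] [EMetricSpace Y] [MeasurableSpace Y]
    [BorelSpace Y] {f : X → Y} (hf : LocallyLipschitz f) {d : ℝ} (hd : 0 ≤ d) {s : Set X}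
    (hs : μH[d] s = 0) : μH[d] (f '' s) = 0 := by
  choose K u hu hfu using hf
  obtain ⟨c, hc, hcover⟩ := countable_cover_nhds hu
  have hsub : f '' s ⊆ ⋃ x ∈ c, f '' (s ∩ u x) := by
    rintro _ ⟨y, hy, rfl⟩
    obtain ⟨x, hx, hyx⟩ := mem_iUnion₂.1 (hcover.symm ▸ mem_univ y)
    exact mem_iUnion₂.2 ⟨x, hx, y, ⟨hy, hyx⟩, rfl⟩
  refine measure_mono_null hsub ((measure_biUnion_null_iff hc).2 fun x _ => ?_)
  refine nonpos_iff_eq_zero.1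
    ((((hfu x).mono inter_subset_right).hausdorffMeasure_image_le hd).trans ?_)
  rw [measure_mono_null inter_subset_left hs, mul_zero]

theorem setOf_segment_inter_nonempty_subset_image_lineMap {E : Type*} [AddCommGroup E]
    [Module ℝ E] {a : E} {K : Set E} (ha : a ∉ K) :
    {z | (segment ℝ a z ∩ K).Nonempty} ⊆
      (fun p : ℝ × E => AffineMap.lineMap a p.2 p.1) '' (univ ×ˢ K) := by
  rintro z ⟨k, hk, hkK⟩
  rw [segment_eq_image_lineMap] at hk
  obtain ⟨s, -, rfl⟩ := hk
  have hs : s ≠ 0 := by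
    rintro rfl
    exact ha (by simpa using hkK)
  exact ⟨(s⁻¹, AffineMap.lineMap a z s), ⟨mem_univ _, hkK⟩, by simp [inv_mul_cancel₀ hs]⟩

theorem hausdorffMeasure_setOf_segment_inter_nonempty_eq_zero {E : Type*} [NormedAddCommGroup E]
    [NormedSpace ℝ E] [MeasurableSpace E] [BorelSpace E] [SecondCountableTopology E] {d : ℝ}
    (hd : 0 < d) {K : Set E} (hK : μH[d] K = 0) {a : E} (ha : a ∉ K) :
    μH[d + 1] {z | (segment ℝ a z ∩ K).Nonempty} = 0 := by
  have hcone : ContDiff ℝ 1 fun p : ℝ × E => AffineMap.lineMap a p.2 p.1 := by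
    simp only [AffineMap.lineMap_apply_module']
    fun_prop
  exact measure_mono_null (setOf_segment_inter_nonempty_subset_image_lineMap ha)
    (hcone.locallyLipschitz.hausdorffMeasure_image_eq_zero (by linarith)
      (Measure.hausdorffMeasure_univ_prod_eq_zero hd hK))

theorem Convex.joinedIn_diff {E : Type*} [AddCommGroup E] [Module ℝ E] [TopologicalSpace E]
    [ContinuousAdd E] [ContinuousSMul ℝ E] [MeasurableSpace E] {μ : Measure E}
    [μ.IsOpenPosMeasure] {V K : Set E} (hV : Convex ℝ V) (hVo : IsOpen V)
    (hK : ∀ a ∉ K, μ {z | (segment ℝ a z ∩ K).Nonempty} = 0) {x y : E} (hx : x ∈ V \ K)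
    (hy : y ∈ V \ K) : JoinedIn (V \ K) x y := by
  have hnull : μ ({z | (segment ℝ x z ∩ K).Nonempty} ∪ {z | (segment ℝ y z ∩ K).Nonempty}) = 0 :=
    measure_union_null (hK x hx.2) (hK y hy.2)
  obtain ⟨z, hzV, hz⟩ : (V \ ({z | (segment ℝ x z ∩ K).Nonempty} ∪
      {z | (segment ℝ y z ∩ K).Nonempty})).Nonempty :=
    nonempty_of_measure_ne_zero fun h => (hVo.measure_pos μ ⟨x, hx.1⟩).ne'
      (measure_mono_null (subset_sdiff_union _ _) (measure_union_null h hnull))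
  simp only [mem_union, mem_ofPred_eq, not_or, not_nonempty_iff_eq_empty] at hz
  have hseg : ∀ w ∈ V, segment ℝ w z ∩ K = ∅ → segment ℝ w z ⊆ V \ K := fun w hw hwz =>
    subset_sdiff.2 ⟨hV.segment_subset hw hzV, disjoint_iff_inter_eq_empty.2 hwz⟩
  exact (JoinedIn.of_segment_subset (hseg x hx.1 hz.1)).trans
    (JoinedIn.of_segment_subset (hseg y hy.1 hz.2)).symm

theorem IsConnected.isPathConnected_of_locally_joinedIn {X : Type*} [TopologicalSpace X]
    {U A : Set X} (hU : IsConnected U) (hAU : A ⊆ U) (hUA : U ⊆ closure A)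
    (hloc : ∀ x ∈ U, ∃ V ∈ 𝓝 x, ∀ y ∈ V ∩ A, ∀ z ∈ V ∩ A, JoinedIn A y z) :
    IsPathConnected A := by
  refine isPathConnected_iff.2 ⟨?_, fun a ha b hb => ?_⟩
  · obtain ⟨x, hx⟩ := hU.nonempty
    exact closure_nonempty_iff.1 ⟨x, hUA hx⟩
  let P x y := ∃ V ∈ 𝓝 x, ∃ W ∈ 𝓝 y, ∀ x' ∈ V ∩ A, ∀ y' ∈ W ∩ A, JoinedIn A x' y'
  suffices P a b by
    obtain ⟨V, hV, W, hW, h⟩ := this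
    exact h a ⟨mem_of_mem_nhds hV, ha⟩ b ⟨mem_of_mem_nhds hW, hb⟩
  refine hU.isPreconnected.induction₂ P (fun x hx => ?_) (fun x y z _ hy _ => ?_)
    (fun x y _ _ => ?_) (hAU ha) (hAU hb)
  · obtain ⟨V, hV, hVA⟩ := hloc x hx
    filter_upwards [nhdsWithin_le_nhds (eventually_mem_nhds_iff.2 hV)] with y hy
    exact ⟨V, hV, V, hy, hVA⟩
  · rintro ⟨V, hV, W, hW, hVW⟩ ⟨W', hW', Z, hZ, hWZ⟩
    obtain ⟨m, hm, hmA⟩ := mem_closure_iff_nhds.1 (hUA hy) _ (inter_mem hW hW')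
    exact ⟨V, hV, Z, hZ, fun x' hx' z' hz' =>
      (hVW x' hx' m ⟨hm.1, hmA⟩).trans (hWZ m ⟨hm.2, hmA⟩ z' hz')⟩
  · rintro ⟨V, hV, W, hW, h⟩
    exact ⟨W, hW, V, hV, fun y' hy' x' hx' => (h x' hx' y' hy').symm⟩

/-- Removing a set of `(n-1)`-dimensional Hausdorff measure zero from a
connected open subset of `ℝⁿ` (`n ≥ 2`) leaves a path-connected set. -/
theorem pathConnected_diff_of_hausdorffMeasure_zero (n : ℕ) (hn : 2 ≤ n)
    (U K : Set (EuclideanSpace ℝ (Fin n))) (hU : IsOpen U) (hUc : IsConnected U)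
    (hK : MeasureTheory.Measure.hausdorffMeasure ((n : ℝ) - 1) K = 0) :
    IsPathConnected (U \ K) := by
  have hd : 0 < (n : ℝ) - 1 := by
    have : (2 : ℝ) ≤ n := by exact_mod_cast hn
    linarith
  have hshadow : ∀ a ∉ K, μH[(n : ℝ)] {z | (segment ℝ a z ∩ K).Nonempty} = 0 := fun a ha => by
    simpa using hausdorffMeasure_setOf_segment_inter_nonempty_eq_zero hd hK ha
  have hKn : μH[(n : ℝ)] K = 0 :=
    nonpos_iff_eq_zero.1 (hK ▸ Measure.hausdorffMeasure_mono (sub_le_self _ zero_le_one) K)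
  have hdense : Dense Kᶜ :=
    interior_eq_empty_iff_dense_compl.1 (Measure.interior_eq_empty_of_null hKn)
  refine hUc.isPathConnected_of_locally_joinedIn sdiff_subset
    (hdense.open_subset_closure_inter hU) fun x hx => ?_
  obtain ⟨r, hr, hball⟩ := Metric.isOpen_iff.1 hU x hx
  refine ⟨ball x r, ball_mem_nhds x hr, fun y hy z hz => ?_⟩
  exact ((convex_ball x r).joinedIn_diff isOpen_ball hshadow ⟨hy.1, hy.2.2⟩ ⟨hz.1, hz.2.2⟩).mono
    (sdiff_subset_sdiff_left hball)
end
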